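/- arXiv:2505.15658 — 3 statements merged into one kernel-verified Lean document; each statement's English description precedes it below -/
import Mathlib

section
/- Let u, w : ℝ³ → ℝ be bounded measurable functions and ρ_ε a standard mollifier. Then the commutator identity (ρ_ε⋆(uw))(X) - (ρ_ε⋆u)(X)(ρ_ε⋆w)(X) = ∫ δ_Y u(X) δ_Y w(X) ρ_ε(Y) dY - (u - ρ_ε⋆u)(X)(w - ρ_ε⋆w)(X) holds for every X, where δ_Y f(X) = f(X - Y) - f(X). -/
open MeasureTheory

/-! Expanding `(f - c)(g - d)` under a weight `ρ` of total mass one, the integral of the product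
of increments is `∫ ρ f g - c ∫ ρ g - d ∫ ρ f + c d`; subtracting
`(c - ∫ ρ f)(d - ∫ ρ g)` leaves exactly `∫ ρ f g - (∫ ρ f)(∫ ρ g)`. For the commutator take
`f = u (X - ·)`, `g = w (X - ·)`, `c = u X`, `d = w X`. -/

section WeightedIntegral

variable {α : Type*} [MeasurableSpace α] {μ : Measure α} {ρ f g : α → ℝ}

theorem MeasureTheory.Integrable.mul_of_abs_le {B : ℝ} (hρ : Integrable ρ μ) (hf : Measurable f)
    (hfB : ∀ x, |f x| ≤ B) : Integrable (fun x => ρ x * f x) μ :=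
  hρ.mul_bdd hf.aestronglyMeasurable (.of_forall hfB)

theorem integral_sub_mul_sub_mul_weight (c d : ℝ) (hρ : Integrable ρ μ)
    (hρf : Integrable (fun x => ρ x * f x) μ) (hρg : Integrable (fun x => ρ x * g x) μ)
    (hρfg : Integrable (fun x => ρ x * (f x * g x)) μ) :
    ∫ x, (f x - c) * (g x - d) * ρ x ∂μ =
      (∫ x, ρ x * (f x * g x) ∂μ) - c * (∫ x, ρ x * g x ∂μ) -
        (d * (∫ x, ρ x * f x ∂μ) - c * d * ∫ x, ρ x ∂μ) := by
  have hexpand : (fun x => (f x - c) * (g x - d) * ρ x) = fun x =>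
      (ρ x * (f x * g x) - c * (ρ x * g x)) - (d * (ρ x * f x) - c * d * ρ x) := by
    funext x; ring
  have hA : Integrable (fun x => ρ x * (f x * g x) - c * (ρ x * g x)) μ :=
    hρfg.sub (hρg.const_mul c)
  have hB : Integrable (fun x => d * (ρ x * f x) - c * d * ρ x) μ :=
    (hρf.const_mul d).sub (hρ.const_mul (c * d))
  rw [hexpand, integral_sub hA hB, integral_sub hρfg (hρg.const_mul c),
    integral_sub (hρf.const_mul d) (hρ.const_mul (c * d)), integral_const_mul, integral_const_mul,
    integral_const_mul]

theorem integral_mul_sub_integral_mul_integral_eq (c d : ℝ) (hρ1 : ∫ x, ρ x ∂μ = 1)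
    (hρf : Integrable (fun x => ρ x * f x) μ) (hρg : Integrable (fun x => ρ x * g x) μ)
    (hρfg : Integrable (fun x => ρ x * (f x * g x)) μ) :
    (∫ x, ρ x * (f x * g x) ∂μ) - (∫ x, ρ x * f x ∂μ) * (∫ x, ρ x * g x ∂μ) =
      (∫ x, (f x - c) * (g x - d) * ρ x ∂μ) -
        (c - ∫ x, ρ x * f x ∂μ) * (d - ∫ x, ρ x * g x ∂μ) := by
  have hρ : Integrable ρ μ := .of_integral_ne_zero (hρ1 ▸ one_ne_zero)
  rw [integral_sub_mul_sub_mul_weight c d hρ hρf hρg hρfg, hρ1]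
  ring

end WeightedIntegral

theorem stmt_3_general (ρε : (ℝ × ℝ) × ℝ → ℝ)
    (hρ_norm : (∫ Y : (ℝ × ℝ) × ℝ, ρε Y) = 1)
    (u w : (ℝ × ℝ) × ℝ → ℝ) (Bu Bw : ℝ)
    (hu_meas : Measurable u) (hw_meas : Measurable w)
    (hu_bdd : ∀ X, |u X| ≤ Bu) (hw_bdd : ∀ X, |w X| ≤ Bw) :
    ∀ X : (ℝ × ℝ) × ℝ,
      (∫ Y, ρε Y * (u (X - Y) * w (X - Y))) -
          (∫ Y, ρε Y * u (X - Y)) * (∫ Y, ρε Y * w (X - Y)) =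
        (∫ Y, (u (X - Y) - u X) * (w (X - Y) - w X) * ρε Y) -
          (u X - ∫ Y, ρε Y * u (X - Y)) * (w X - ∫ Y, ρε Y * w (X - Y)) := by
  intro X
  have hρ : Integrable ρε := .of_integral_ne_zero (hρ_norm ▸ one_ne_zero)
  have huw_bdd Z : |u Z * w Z| ≤ Bu * Bw := by
    rw [abs_mul]
    exact mul_le_mul (hu_bdd Z) (hw_bdd Z) (abs_nonneg _) ((abs_nonneg _).trans (hu_bdd Z))
  exact integral_mul_sub_integral_mul_integral_eq (u X) (w X) hρ_norm
    (hρ.mul_of_abs_le (by fun_prop) fun Y => hu_bdd (X - Y))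
    (hρ.mul_of_abs_le (by fun_prop) fun Y => hw_bdd (X - Y))
    (hρ.mul_of_abs_le (by fun_prop) fun Y => huw_bdd (X - Y))

/-- Constantin–E–Titi commutator identity
`(ρ_ε⋆(uw)) - (ρ_ε⋆u)(ρ_ε⋆w) = ∫ δ_Y u δ_Y w ρ_ε dY - (u - ρ_ε⋆u)(w - ρ_ε⋆w)`. -/
theorem stmt_3 (ρε : (ℝ × ℝ) × ℝ → ℝ)
    (hρ_cont : Continuous ρε) (hρ_nonneg : ∀ Y, 0 ≤ ρε Y)
    (hρ_supp : HasCompactSupport ρε)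
    (hρ_norm : (∫ Y : (ℝ × ℝ) × ℝ, ρε Y) = 1)
    (u w : (ℝ × ℝ) × ℝ → ℝ) (Bu Bw : ℝ)
    (hu_meas : Measurable u) (hw_meas : Measurable w)
    (hu_bdd : ∀ X, |u X| ≤ Bu) (hw_bdd : ∀ X, |w X| ≤ Bw) :
    ∀ X : (ℝ × ℝ) × ℝ,
      (∫ Y, ρε Y * (u (X - Y) * w (X - Y))) -
          (∫ Y, ρε Y * u (X - Y)) * (∫ Y, ρε Y * w (X - Y)) =
        (∫ Y, (u (X - Y) - u X) * (w (X - Y) - w X) * ρε Y) -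
          (u X - ∫ Y, ρε Y * u (X - Y)) * (w X - ∫ Y, ρε Y * w (X - Y)) :=
  stmt_3_general ρε hρ_norm u w Bu Bw hu_meas hw_meas hu_bdd hw_bdd
end

section
/- Let u : ℝ³ → ℝ² have anisotropic Hölder seminorm ≤ M with exponents α, β ∈ (0,1), and let w : ℝ³ → ℝ satisfy |w(X) - (ρ_ε⋆w)(X)| ≤ C₁ ε^{α-1} M and |δ_Y w(X)| ≤ C₁ ε^{α-1} M for |Y| ≤ ε. Then the commutator satisfies the pointwise bound |(ρ_ε⋆(u w))(X) - (ρ_ε⋆u)(X)(ρ_ε⋆w)(X)| ≤ C (ε^α + ε^β) ε^{α-1} M², with C depending only on C₁ and the mollifier. -/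
open MeasureTheory

private lemma tele_step {E : Type*} [NormedAddCommGroup E] (w : E → ℝ) (c ε : ℝ)
    (h : ∀ Z V : E, ‖V‖ ≤ ε → |w (Z - V) - w Z| ≤ c) (X V : E) (hV : ‖V‖ ≤ ε) :
    ∀ m : ℕ, |w (X - m • V) - w X| ≤ m * c := by
  intro m
  induction m with
  | zero => simp
  | succ k ih =>
    have key : X - (k + 1) • V = (X - k • V) - V := by
      rw [succ_nsmul]; abel
    have h1 := h (X - k • V) V hV
    rw [← key] at h1
    calc |w (X - (k + 1) • V) - w X|
        ≤ |w (X - (k + 1) • V) - w (X - k • V)| + |w (X - k • V) - w X| := abs_sub_le _ _ _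
      _ ≤ c + k * c := add_le_add h1 ih
      _ = ((k : ℝ) + 1) * c := by ring
      _ = ((k + 1 : ℕ) : ℝ) * c := by push_cast; ring

private lemma tele {E : Type*} [NormedAddCommGroup E] [NormedSpace ℝ E] (w : E → ℝ) (c ε : ℝ)
    (h : ∀ Z V : E, ‖V‖ ≤ ε → |w (Z - V) - w Z| ≤ c) (X Y : E) (n : ℕ) (hn : n ≠ 0)
    (hY : ‖Y‖ ≤ n * ε) : |w (X - Y) - w X| ≤ n * c := by
  have hn' : 0 < (n : ℝ) := by exact_mod_cast Nat.pos_of_ne_zero hn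
  set V : E := (n : ℝ)⁻¹ • Y with hVdef
  have hnV : n • V = Y := by
    rw [hVdef, ← Nat.cast_smul_eq_nsmul ℝ, smul_smul, mul_inv_cancel₀ (ne_of_gt hn'), one_smul]
  have hVnorm : ‖V‖ ≤ ε := by
    rw [hVdef, norm_smul, norm_inv, Real.norm_natCast]
    rw [inv_mul_le_iff₀ hn']
    linarith
  have := tele_step w c ε h X V hVnorm n
  rwa [hnV] at this

private lemma integrable_aux {F : Type*} [NormedAddCommGroup F] [NormedSpace ℝ F]
    (φ : (ℝ × ℝ) × ℝ → ℝ) (g : (ℝ × ℝ) × ℝ → F) (hφ : Continuous φ) (hg : Continuous g)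
    (hc : HasCompactSupport φ) :
    Integrable (fun Y => φ Y • g Y) :=
  (hφ.smul hg).integrable_of_hasCompactSupport hc.smul_right

/-- pointwise commutator bound
`|(ρ_ε⋆(uw)) - (ρ_ε⋆u)(ρ_ε⋆w)| ≤ C (ε^α + ε^β) ε^(α-1) M²`. -/
theorem stmt_4 (ρ : ℝ → ℝ) (hρ_smooth : ContDiff ℝ (⊤ : ℕ∞) ρ)
    (hρ_nonneg : ∀ s, 0 ≤ ρ s) (hρ_supp : HasCompactSupport ρ)
    (C₁ : ℝ) (hC₁ : 0 < C₁) :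
    ∃ C > 0, ∀ (u : (ℝ × ℝ) × ℝ → ℝ × ℝ) (w : (ℝ × ℝ) × ℝ → ℝ) (M α β ε : ℝ),
      0 < α → α < 1 → 0 < β → β < 1 → 0 < ε → 0 ≤ M →
      Continuous u → Continuous w →
      (∀ (x : ℝ × ℝ) (z ξ : ℝ), ‖u (x, z + ξ) - u (x, z)‖ ≤ M * |ξ| ^ β) →
      (∀ (x ξh : ℝ × ℝ) (z : ℝ), ‖u (x + ξh, z) - u (x, z)‖ ≤ M * ‖ξh‖ ^ α) →
      (∫ Y : (ℝ × ℝ) × ℝ, (ε ^ 3)⁻¹ * ρ (‖Y‖ / ε)) = 1 →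
      (∀ X : (ℝ × ℝ) × ℝ,
        |w X - ∫ Y : (ℝ × ℝ) × ℝ, ((ε ^ 3)⁻¹ * ρ (‖Y‖ / ε)) * w (X - Y)| ≤
          C₁ * ε ^ (α - 1) * M) →
      (∀ (X Y : (ℝ × ℝ) × ℝ), ‖Y‖ ≤ ε →
        |w (X - Y) - w X| ≤ C₁ * ε ^ (α - 1) * M) →
      ∀ X : (ℝ × ℝ) × ℝ,
        ‖(∫ Y : (ℝ × ℝ) × ℝ, ((ε ^ 3)⁻¹ * ρ (‖Y‖ / ε)) • (w (X - Y) • u (X - Y))) -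
            (∫ Y : (ℝ × ℝ) × ℝ, ((ε ^ 3)⁻¹ * ρ (‖Y‖ / ε)) * w (X - Y)) •
              (∫ Y : (ℝ × ℝ) × ℝ, ((ε ^ 3)⁻¹ * ρ (‖Y‖ / ε)) • u (X - Y))‖ ≤
          C * (ε ^ α + ε ^ β) * ε ^ (α - 1) * M ^ 2 := by
  obtain ⟨R, hR⟩ := hρ_supp.isBounded.subset_closedBall 0
  set R' : ℝ := max R 1 with hR'def
  have hR'1 : 1 ≤ R' := le_max_right R 1
  have hR'0 : 0 < R' := lt_of_lt_of_le one_pos hR'1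
  set n : ℕ := ⌈R'⌉₊ with hndef
  have hn0 : n ≠ 0 := (Nat.ceil_pos.mpr hR'0).ne'
  have hR'n : R' ≤ (n : ℝ) := Nat.le_ceil R'
  refine ⟨((n : ℝ) + 1) * C₁ * R', by positivity, ?_⟩
  intro u w M α β ε hα0 hα1 hβ0 hβ1 hε0 hM0 hu_cont hw_cont hu_v hu_h hnorm hw_moll hw_inc X
  -- zero of ρ beyond R'
  have hρ_zero : ∀ s : ℝ, R' < s → ρ s = 0 := by
    intro s hs
    by_contra hne
    have hmem : s ∈ tsupport ρ := subset_tsupport ρ (by simpa using hne)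
    have := hR hmem
    rw [Metric.mem_closedBall, Real.dist_eq, sub_zero] at this
    have : s ≤ R := le_trans (le_abs_self s) this
    have : s ≤ R' := le_trans this (le_max_left R 1)
    linarith
  set φ : (ℝ × ℝ) × ℝ → ℝ := fun Y => (ε ^ 3)⁻¹ * ρ (‖Y‖ / ε) with hφdef
  have hφapp : ∀ Y : (ℝ × ℝ) × ℝ, (ε ^ 3)⁻¹ * ρ (‖Y‖ / ε) = φ Y := fun _ => rfl
  simp only [hφapp] at hnorm hw_moll ⊢
  have hφ_cont : Continuous φ := by
    exact continuous_const.mul (hρ_smooth.continuous.comp (continuous_norm.div_const ε))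
  have hφ_nonneg : ∀ Y, 0 ≤ φ Y := fun Y => mul_nonneg (by positivity) (hρ_nonneg _)
  have hφ_zero : ∀ Y : (ℝ × ℝ) × ℝ, R' * ε < ‖Y‖ → φ Y = 0 := by
    intro Y hY
    have : R' < ‖Y‖ / ε := (lt_div_iff₀ hε0).mpr hY
    simp [hφdef, hρ_zero _ this]
  have hφ_supp : HasCompactSupport φ := by
    apply HasCompactSupport.intro (isCompact_closedBall (0 : (ℝ × ℝ) × ℝ) (R' * ε))
    intro Y hY
    apply hφ_zero
    rw [Metric.mem_closedBall, dist_zero_right, not_le] at hY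
    exact hY
  set W : ℝ := ∫ Y, φ Y * w (X - Y) with hWdef
  set U : ℝ × ℝ := ∫ Y, φ Y • u (X - Y) with hUdef
  set c : ℝ := C₁ * ε ^ (α - 1) * M with hcdef
  have hc0 : 0 ≤ c := by
    rw [hcdef]
    have : (0:ℝ) < ε ^ (α - 1) := Real.rpow_pos_of_pos hε0 _
    positivity
  -- continuity facts
  have hcw : Continuous fun Y : (ℝ × ℝ) × ℝ => w (X - Y) :=
    hw_cont.comp (continuous_const.sub continuous_id)
  have hcu : Continuous fun Y : (ℝ × ℝ) × ℝ => u (X - Y) :=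
    hu_cont.comp (continuous_const.sub continuous_id)
  -- integrabilities
  have i1 : Integrable (fun Y => φ Y • (w (X - Y) • u (X - Y))) :=
    integrable_aux φ _ hφ_cont (hcw.smul hcu) hφ_supp
  have i2 : Integrable (fun Y => φ Y • (w (X - Y) • u X)) :=
    integrable_aux φ _ hφ_cont (hcw.smul continuous_const) hφ_supp
  have i3 : Integrable (fun Y => φ Y • (W • u (X - Y))) :=
    integrable_aux φ _ hφ_cont (hcu.const_smul W) hφ_supp
  have i4 : Integrable (fun Y => φ Y • (W • u X)) :=
    integrable_aux φ _ hφ_cont continuous_const hφ_supp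
  have iφ : Integrable φ := by
    have := integrable_aux φ (fun _ => (1:ℝ)) hφ_cont continuous_const hφ_supp
    simpa using this
  have iφw : Integrable (fun Y => φ Y * w (X - Y)) := by
    have := integrable_aux φ (fun Y => w (X - Y)) hφ_cont hcw hφ_supp
    simpa [smul_eq_mul] using this
  -- key identity
  have expand : ∀ Y : (ℝ × ℝ) × ℝ, φ Y • ((w (X - Y) - W) • (u (X - Y) - u X))
      = φ Y • (w (X - Y) • u (X - Y)) - φ Y • (w (X - Y) • u X)
        - φ Y • (W • u (X - Y)) + φ Y • (W • u X) := by
    intro Y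
    simp only [sub_smul, smul_sub, smul_add]
    abel
  have e2 : (∫ Y, φ Y • (w (X - Y) • u X)) = W • u X := by
    simp_rw [smul_smul]
    rw [integral_smul_const]
  have e3 : (∫ Y, φ Y • (W • u (X - Y))) = W • U := by
    have h : ∀ Y : (ℝ × ℝ) × ℝ, φ Y • (W • u (X - Y)) = W • (φ Y • u (X - Y)) :=
      fun Y => smul_comm _ _ _
    simp_rw [h, integral_smul]; rfl
  have e4 : (∫ Y, φ Y • (W • u X)) = W • u X := by
    simp_rw [smul_smul]
    rw [integral_smul_const, integral_mul_const, hnorm, one_mul]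
  have key : (∫ Y, φ Y • ((w (X - Y) - W) • (u (X - Y) - u X)))
      = (∫ Y, φ Y • (w (X - Y) • u (X - Y))) - W • U := by
    have i12 : Integrable (fun Y => φ Y • (w (X - Y) • u (X - Y)) - φ Y • (w (X - Y) • u X)) :=
      i1.sub i2
    have i123 : Integrable (fun Y => φ Y • (w (X - Y) • u (X - Y)) - φ Y • (w (X - Y) • u X)
        - φ Y • (W • u (X - Y))) := i12.sub i3
    simp_rw [expand]
    rw [integral_add i123 i4, integral_sub i12 i3, integral_sub i1 i2, e2, e3, e4]
    abel
  rw [← key]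
  -- pointwise bound
  set K : ℝ := ((n : ℝ) * c + c) * (M * (R' * (ε ^ α + ε ^ β))) with hKdef
  have hbound : ∀ Y : (ℝ × ℝ) × ℝ,
      ‖φ Y • ((w (X - Y) - W) • (u (X - Y) - u X))‖ ≤ φ Y * K := by
    intro Y
    rcases le_or_gt ‖Y‖ (R' * ε) with hY | hY
    · -- w part
      have hwb : |w (X - Y) - W| ≤ (n : ℝ) * c + c := by
        have h1 : |w (X - Y) - w X| ≤ (n : ℝ) * c := by
          apply tele w c ε (fun Z V hV => hw_inc Z V hV) X Y n hn0
          calc ‖Y‖ ≤ R' * ε := hY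
            _ ≤ (n : ℝ) * ε := by nlinarith
        have h2 : |w X - W| ≤ c := hw_moll X
        calc |w (X - Y) - W| ≤ |w (X - Y) - w X| + |w X - W| := abs_sub_le _ _ _
          _ ≤ (n : ℝ) * c + c := add_le_add h1 h2
      -- u part
      have hub : ‖u (X - Y) - u X‖ ≤ M * (R' * (ε ^ α + ε ^ β)) := by
        have hXY : X - Y = (X.1 - Y.1, X.2 - Y.2) := rfl
        have hXe : X = (X.1, X.2) := rfl
        have hv : ‖u (X.1 - Y.1, X.2 - Y.2) - u (X.1 - Y.1, X.2)‖ ≤ M * |Y.2| ^ β := by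
          have := hu_v (X.1 - Y.1) X.2 (-Y.2)
          rw [← sub_eq_add_neg, abs_neg] at this
          exact this
        have hh : ‖u (X.1 - Y.1, X.2) - u (X.1, X.2)‖ ≤ M * ‖Y.1‖ ^ α := by
          have := hu_h X.1 (-Y.1) X.2
          rw [← sub_eq_add_neg, norm_neg] at this
          exact this
        have hY1 : ‖Y.1‖ ≤ R' * ε := le_trans (norm_fst_le Y) hY
        have hY2 : |Y.2| ≤ R' * ε := by
          have := norm_snd_le Y
          rw [Real.norm_eq_abs] at this
          exact le_trans this hY
        have hra : ‖Y.1‖ ^ α ≤ R' * ε ^ α := by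
          calc ‖Y.1‖ ^ α ≤ (R' * ε) ^ α :=
                Real.rpow_le_rpow (norm_nonneg _) hY1 (le_of_lt hα0)
            _ = R' ^ α * ε ^ α := Real.mul_rpow (le_of_lt hR'0) (le_of_lt hε0)
            _ ≤ R' * ε ^ α := by
                have : R' ^ α ≤ R' ^ (1:ℝ) :=
                  Real.rpow_le_rpow_of_exponent_le hR'1 (le_of_lt hα1)
                rw [Real.rpow_one] at this
                have hε' : (0:ℝ) ≤ ε ^ α := le_of_lt (Real.rpow_pos_of_pos hε0 _)
                nlinarith
        have hrb : |Y.2| ^ β ≤ R' * ε ^ β := by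
          calc |Y.2| ^ β ≤ (R' * ε) ^ β :=
                Real.rpow_le_rpow (abs_nonneg _) hY2 (le_of_lt hβ0)
            _ = R' ^ β * ε ^ β := Real.mul_rpow (le_of_lt hR'0) (le_of_lt hε0)
            _ ≤ R' * ε ^ β := by
                have : R' ^ β ≤ R' ^ (1:ℝ) :=
                  Real.rpow_le_rpow_of_exponent_le hR'1 (le_of_lt hβ1)
                rw [Real.rpow_one] at this
                have hε' : (0:ℝ) ≤ ε ^ β := le_of_lt (Real.rpow_pos_of_pos hε0 _)
                nlinarith
        calc ‖u (X - Y) - u X‖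
            = ‖(u (X.1 - Y.1, X.2 - Y.2) - u (X.1 - Y.1, X.2))
                + (u (X.1 - Y.1, X.2) - u (X.1, X.2))‖ := by
              rw [hXY]; nth_rewrite 2 [hXe]; congr 1; abel
          _ ≤ ‖u (X.1 - Y.1, X.2 - Y.2) - u (X.1 - Y.1, X.2)‖
                + ‖u (X.1 - Y.1, X.2) - u (X.1, X.2)‖ := norm_add_le _ _
          _ ≤ M * |Y.2| ^ β + M * ‖Y.1‖ ^ α := add_le_add hv hh
          _ ≤ M * (R' * ε ^ β) + M * (R' * ε ^ α) :=
              add_le_add (mul_le_mul_of_nonneg_left hrb hM0)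
                (mul_le_mul_of_nonneg_left hra hM0)
          _ = M * (R' * (ε ^ α + ε ^ β)) := by ring
      calc ‖φ Y • ((w (X - Y) - W) • (u (X - Y) - u X))‖
          = φ Y * (|w (X - Y) - W| * ‖u (X - Y) - u X‖) := by
            rw [norm_smul, norm_smul, Real.norm_eq_abs, Real.norm_eq_abs,
              abs_of_nonneg (hφ_nonneg Y)]
        _ ≤ φ Y * K := by
            apply mul_le_mul_of_nonneg_left _ (hφ_nonneg Y)
            rw [hKdef]
            apply mul_le_mul hwb hub (norm_nonneg _)
            have : 0 ≤ (n:ℝ) * c := mul_nonneg (Nat.cast_nonneg n) hc0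
            linarith
    · rw [hφ_zero Y hY]
      simp
  have hKint : Integrable (fun Y => φ Y * K) := iφ.mul_const K
  calc ‖∫ Y, φ Y • ((w (X - Y) - W) • (u (X - Y) - u X))‖
      ≤ ∫ Y, φ Y * K :=
        norm_integral_le_of_norm_le hKint (Filter.Eventually.of_forall hbound)
    _ = K := by rw [integral_mul_const, hnorm, one_mul]
    _ = ((n : ℝ) + 1) * C₁ * R' * (ε ^ α + ε ^ β) * ε ^ (α - 1) * M ^ 2 := by
        rw [hKdef, hcdef]; ring
end

section
/- Let u, v : ℝⁿ → ℝ be bounded Hölder continuous functions with exponent α ∈ (1/3, 1) and seminorms [u]_α, [v]_α, and let ρ_ε be a standard mollifier. Let ψ be a fixed C¹ compactly supported function. Then |∫ ((ρ_ε⋆(uv)) − (ρ_ε⋆u)(ρ_ε⋆v)) ∂_i(ψ (ρ_ε⋆u)) dX| ≤ C(ψ) ε^{3α−1} (1 + [u]_α)²(1 + [v]_α)(1 + ‖u‖_∞ + ‖v‖_∞)², and in particular this tends to 0 as ε → 0 when α > 1/3. -/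
open MeasureTheory

open Metric Set Filter

set_option maxHeartbeats 2000000

noncomputable section CET18aux

namespace CET18

abbrev E := (ℝ × ℝ) × ℝ

instance e1 : (volume : Measure (ℝ × ℝ)).IsAddLeftInvariant :=
  Measure.prod.instIsAddLeftInvariant

instance e2 : (volume : Measure E).IsAddLeftInvariant :=
  Measure.prod.instIsAddLeftInvariant

def φ (ρ : ℝ → ℝ) (ε : ℝ) (t : E) : ℝ := (ε ^ 3)⁻¹ * ρ (‖t‖ / ε)

def mol (ρ : ℝ → ℝ) (ε : ℝ) (w : E → ℝ) (X : E) : ℝ := ∫ t : E, φ ρ ε t * w (X - t)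

lemma vol_ball (r : ℝ) (hr : 0 ≤ r) : (volume (closedBall (0:E) r)).toReal = 8 * r ^ 3 := by
  have h1 : closedBall (0:E) r
      = (closedBall (0:ℝ) r ×ˢ closedBall (0:ℝ) r) ×ˢ closedBall (0:ℝ) r := by
    rw [closedBall_prod_same, closedBall_prod_same]; rfl
  rw [h1, Measure.volume_eq_prod, Measure.prod_prod, Measure.volume_eq_prod, Measure.prod_prod,
    Real.volume_closedBall,
    ← ENNReal.ofReal_mul (by linarith), ← ENNReal.ofReal_mul (by positivity),
    ENNReal.toReal_ofReal (by positivity)]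
  ring

variable {ρ : ℝ → ℝ} {Rρ ε α Lρ : ℝ}

lemma holder_cont {w : E → ℝ} {M : ℝ} (hαpos : 0 < α)
    (hw : ∀ X Y, |w X - w Y| ≤ M * dist X Y ^ α) : Continuous w := by
  rw [continuous_iff_continuousAt]
  intro x
  apply tendsto_iff_dist_tendsto_zero.2
  refine squeeze_zero (g := fun y : E => M * dist y x ^ α) (fun y => dist_nonneg)
    (fun y => by rw [Real.dist_eq]; exact hw y x) ?_
  have h1 : Tendsto (fun y : E => dist y x) (nhds x) (nhds 0) := by
    have h := (continuous_id.dist (continuous_const : Continuous fun _ : E => x)).tendsto x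
    simpa using h
  have h2 : Tendsto (fun s : ℝ => M * s ^ α) (nhds 0) (nhds 0) := by
    have hc : ContinuousAt (fun s : ℝ => s ^ α) 0 :=
      Real.continuousAt_rpow_const 0 α (Or.inr hαpos.le)
    have h := (hc.tendsto).const_mul M
    simpa [Real.zero_rpow hαpos.ne'] using h
  exact h2.comp h1

lemma phi_nonneg (hρ0 : ∀ s, 0 ≤ ρ s) (hε : 0 < ε) (t : E) : 0 ≤ φ ρ ε t :=
  mul_nonneg (by positivity) (hρ0 _)

lemma phi_zero (hR : ∀ s : ℝ, Rρ < |s| → ρ s = 0) (hε : 0 < ε) {t : E}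
    (ht : Rρ * ε < ‖t‖) : φ ρ ε t = 0 := by
  have h1 : Rρ < ‖t‖ / ε := (lt_div_iff₀ hε).2 ht
  have h2 : ρ (‖t‖ / ε) = 0 := hR _ (by rwa [abs_of_nonneg (div_nonneg (norm_nonneg t) hε.le)])
  simp [φ, h2]

lemma phi_cont (hρc : Continuous ρ) : Continuous (φ ρ ε) :=
  continuous_const.mul (hρc.comp (continuous_norm.div_const ε))

lemma phi_hcs (hR : ∀ s : ℝ, Rρ < |s| → ρ s = 0) (hε : 0 < ε) :
    HasCompactSupport (φ ρ ε) := by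
  apply HasCompactSupport.intro (isCompact_closedBall (0:E) (Rρ * ε))
  intro t ht
  exact phi_zero hR hε (by simpa [dist_zero_right] using ht)

lemma phi_int (hρc : Continuous ρ) (hR : ∀ s : ℝ, Rρ < |s| → ρ s = 0) (hε : 0 < ε) :
    Integrable (φ ρ ε) :=
  (phi_cont hρc).integrable_of_hasCompactSupport (phi_hcs hR hε)

lemma phiw_int (hρc : Continuous ρ) (hR : ∀ s : ℝ, Rρ < |s| → ρ s = 0) (hε : 0 < ε)
    {w : E → ℝ} (hw : Continuous w) (X : E) :
    Integrable (fun t => φ ρ ε t * w (X - t)) := by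
  apply Continuous.integrable_of_hasCompactSupport
    ((phi_cont hρc).mul (hw.comp (continuous_const.sub continuous_id)))
  exact (phi_hcs hR hε).mul_right

lemma mol_sub_le (hρc : Continuous ρ) (hρ0 : ∀ s, 0 ≤ ρ s)
    (hR : ∀ s : ℝ, Rρ < |s| → ρ s = 0) (hε : 0 < ε) (hαpos : 0 < α)
    (hint : (∫ t : E, φ ρ ε t) = 1) {w : E → ℝ} {M : ℝ} (hM : 0 ≤ M)
    (hw : ∀ X Y, |w X - w Y| ≤ M * dist X Y ^ α) (X : E) :
    |mol ρ ε w X - w X| ≤ M * (Rρ * ε) ^ α := by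
  have hwc : Continuous w := holder_cont hαpos hw
  have h1 : Integrable (fun t => φ ρ ε t * w (X - t)) := phiw_int hρc hR hε hwc X
  have h2 : Integrable (fun t : E => φ ρ ε t * w X) := (phi_int hρc hR hε).mul_const _
  have key : mol ρ ε w X - w X = ∫ t : E, φ ρ ε t * (w (X - t) - w X) := by
    have e : (fun t : E => φ ρ ε t * (w (X - t) - w X))
        = fun t : E => φ ρ ε t * w (X - t) - φ ρ ε t * w X := funext fun t => by ring
    rw [e, integral_sub h1 h2, integral_mul_const, hint, one_mul]
    rfl
  rw [key]
  have hb : ∀ t : E, ‖φ ρ ε t * (w (X - t) - w X)‖ ≤ φ ρ ε t * (M * (Rρ * ε) ^ α) := by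
    intro t
    rcases le_or_gt ‖t‖ (Rρ * ε) with h | h
    · rw [norm_mul, Real.norm_eq_abs, Real.norm_eq_abs, abs_of_nonneg (phi_nonneg hρ0 hε t)]
      apply mul_le_mul_of_nonneg_left _ (phi_nonneg hρ0 hε t)
      calc |w (X - t) - w X| ≤ M * dist (X - t) X ^ α := hw _ _
        _ ≤ M * (Rρ * ε) ^ α := by
            apply mul_le_mul_of_nonneg_left _ hM
            apply Real.rpow_le_rpow dist_nonneg _ hαpos.le
            rw [dist_eq_norm, sub_sub_cancel_left, norm_neg]; exact h
    · rw [phi_zero hR hε h]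
      simp
  calc |∫ t : E, φ ρ ε t * (w (X - t) - w X)|
      ≤ ∫ t : E, φ ρ ε t * (M * (Rρ * ε) ^ α) :=
        norm_integral_le_of_norm_le ((phi_int hρc hR hε).mul_const _) (Eventually.of_forall hb)
    _ = M * (Rρ * ε) ^ α := by rw [integral_mul_const, hint, one_mul]

lemma mol_abs_le (hρc : Continuous ρ) (hρ0 : ∀ s, 0 ≤ ρ s)
    (hR : ∀ s : ℝ, Rρ < |s| → ρ s = 0) (hε : 0 < ε)
    (hint : (∫ t : E, φ ρ ε t) = 1) {w : E → ℝ} {Bw : ℝ} (hwc : Continuous w)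
    (hbw : ∀ X, |w X| ≤ Bw) (X : E) : |mol ρ ε w X| ≤ Bw := by
  have hb : ∀ t : E, ‖φ ρ ε t * w (X - t)‖ ≤ φ ρ ε t * Bw := by
    intro t
    rw [norm_mul, Real.norm_eq_abs, Real.norm_eq_abs, abs_of_nonneg (phi_nonneg hρ0 hε t)]
    exact mul_le_mul_of_nonneg_left (hbw _) (phi_nonneg hρ0 hε t)
  calc |mol ρ ε w X| ≤ ∫ t : E, φ ρ ε t * Bw :=
        norm_integral_le_of_norm_le ((phi_int hρc hR hε).mul_const _) (Eventually.of_forall hb)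
    _ = Bw := by rw [integral_mul_const, hint, one_mul]

lemma comm_le (hρc : Continuous ρ) (hρ0 : ∀ s, 0 ≤ ρ s)
    (hR : ∀ s : ℝ, Rρ < |s| → ρ s = 0) (hε : 0 < ε) (hαpos : 0 < α) (hRρ0 : 0 ≤ Rρ)
    (hint : (∫ t : E, φ ρ ε t) = 1) {u v : E → ℝ} {Mu Mv : ℝ}
    (hMu : 0 ≤ Mu) (hMv : 0 ≤ Mv)
    (hu : ∀ X Y, |u X - u Y| ≤ Mu * dist X Y ^ α)
    (hv : ∀ X Y, |v X - v Y| ≤ Mv * dist X Y ^ α) (X : E) :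
    |mol ρ ε (fun Z => u Z * v Z) X - mol ρ ε u X * mol ρ ε v X|
      ≤ 2 * Mu * Mv * ((Rρ * ε) ^ α * (Rρ * ε) ^ α) := by
  have huc : Continuous u := holder_cont hαpos hu
  have hvc : Continuous v := holder_cont hαpos hv
  have hphi := phi_int hρc hR hε
  have hiu : Integrable (fun t => φ ρ ε t * u (X - t)) := phiw_int hρc hR hε huc X
  have hiv : Integrable (fun t => φ ρ ε t * v (X - t)) := phiw_int hρc hR hε hvc X
  have hiuv : Integrable (fun t : E => φ ρ ε t * (u (X - t) * v (X - t))) :=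
    phiw_int hρc hR hε (huc.mul hvc) X
  set a := u X with ha
  set b := v X with hb
  set q := (Rρ * ε) ^ α with hqdef
  have q0 : (0:ℝ) ≤ q := Real.rpow_nonneg (mul_nonneg hRρ0 hε.le) α
  have key : (∫ t : E, φ ρ ε t * ((u (X - t) - a) * (v (X - t) - b)))
      = mol ρ ε (fun Z => u Z * v Z) X - a * mol ρ ε v X - b * mol ρ ε u X + a * b := by
    have e : (fun t : E => φ ρ ε t * ((u (X - t) - a) * (v (X - t) - b)))
        = fun t : E => (φ ρ ε t * (u (X - t) * v (X - t)) - a * (φ ρ ε t * v (X - t))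
            - b * (φ ρ ε t * u (X - t))) + (a * b) * φ ρ ε t := funext fun t => by ring
    have hB : Integrable (fun t : E => φ ρ ε t * (u (X - t) * v (X - t))
        - a * (φ ρ ε t * v (X - t))) := hiuv.sub (hiv.const_mul a)
    have hA : Integrable (fun t : E => φ ρ ε t * (u (X - t) * v (X - t))
        - a * (φ ρ ε t * v (X - t)) - b * (φ ρ ε t * u (X - t))) := hB.sub (hiu.const_mul b)
    rw [e, integral_add hA (hphi.const_mul _), integral_sub hB (hiu.const_mul b),
      integral_sub hiuv (hiv.const_mul a),
      integral_const_mul, integral_const_mul, integral_const_mul, hint, mul_one]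
    rfl
  have hI : |∫ t : E, φ ρ ε t * ((u (X - t) - a) * (v (X - t) - b))| ≤ Mu * Mv * (q * q) := by
    have hbd : ∀ t : E, ‖φ ρ ε t * ((u (X - t) - a) * (v (X - t) - b))‖
        ≤ φ ρ ε t * (Mu * Mv * (q * q)) := by
      intro t
      rcases le_or_gt ‖t‖ (Rρ * ε) with h | h
      · rw [norm_mul, Real.norm_eq_abs, Real.norm_eq_abs, abs_of_nonneg (phi_nonneg hρ0 hε t)]
        apply mul_le_mul_of_nonneg_left _ (phi_nonneg hρ0 hε t)
        rw [abs_mul]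
        have hd : dist (X - t) X ^ α ≤ q := by
          apply Real.rpow_le_rpow dist_nonneg _ hαpos.le
          rw [dist_eq_norm, sub_sub_cancel_left, norm_neg]; exact h
        have h1 : |u (X - t) - a| ≤ Mu * q :=
          (hu _ _).trans (mul_le_mul_of_nonneg_left hd hMu)
        have h2 : |v (X - t) - b| ≤ Mv * q :=
          (hv _ _).trans (mul_le_mul_of_nonneg_left hd hMv)
        calc |u (X - t) - a| * |v (X - t) - b| ≤ (Mu * q) * (Mv * q) :=
              mul_le_mul h1 h2 (abs_nonneg _) (mul_nonneg hMu q0)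
          _ = Mu * Mv * (q * q) := by ring
      · rw [phi_zero hR hε h]
        simp
    calc |∫ t : E, φ ρ ε t * ((u (X - t) - a) * (v (X - t) - b))|
        ≤ ∫ t : E, φ ρ ε t * (Mu * Mv * (q * q)) :=
          norm_integral_le_of_norm_le (hphi.mul_const _) (Eventually.of_forall hbd)
      _ = Mu * Mv * (q * q) := by rw [integral_mul_const, hint, one_mul]
  have h5 : |a - mol ρ ε u X| ≤ Mu * q := by
    rw [abs_sub_comm]; exact mol_sub_le hρc hρ0 hR hε hαpos hint hMu hu X
  have h6 : |b - mol ρ ε v X| ≤ Mv * q := by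
    rw [abs_sub_comm]; exact mol_sub_le hρc hρ0 hR hε hαpos hint hMv hv X
  have hsplit : mol ρ ε (fun Z => u Z * v Z) X - mol ρ ε u X * mol ρ ε v X
      = (∫ t : E, φ ρ ε t * ((u (X - t) - a) * (v (X - t) - b)))
        - (a - mol ρ ε u X) * (b - mol ρ ε v X) := by
    rw [key]; ring
  rw [hsplit]
  calc |(∫ t : E, φ ρ ε t * ((u (X - t) - a) * (v (X - t) - b)))
        - (a - mol ρ ε u X) * (b - mol ρ ε v X)|
      ≤ |∫ t : E, φ ρ ε t * ((u (X - t) - a) * (v (X - t) - b))|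
        + |(a - mol ρ ε u X)| * |(b - mol ρ ε v X)| := by
        rw [← abs_mul]; exact abs_sub _ _
    _ ≤ Mu * Mv * (q * q) + (Mu * q) * (Mv * q) := by
        apply add_le_add hI
        exact mul_le_mul h5 h6 (abs_nonneg _) (mul_nonneg hMu q0)
    _ = 2 * Mu * Mv * (q * q) := by ring

lemma mol_lip (hρc : Continuous ρ) (hρ0 : ∀ s, 0 ≤ ρ s)
    (hR : ∀ s : ℝ, Rρ < |s| → ρ s = 0) (hε : 0 < ε) (hαpos : 0 < α) (hα1 : α ≤ 1)
    (hRρ1 : 1 ≤ Rρ) (hL : ∀ a b : ℝ, |ρ a - ρ b| ≤ Lρ * |a - b|) (hL0 : 0 ≤ Lρ)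
    {w : E → ℝ} {M : ℝ} (hM : 0 ≤ M)
    (hw : ∀ X Y, |w X - w Y| ≤ M * dist X Y ^ α) (x h : E) (hh : ‖h‖ ≤ ε) :
    |mol ρ ε w (x + h) - mol ρ ε w x| ≤ (8 * Lρ * (Rρ + 1) ^ 4) * M * ε ^ (α - 1) * ‖h‖ := by
  have hwc : Continuous w := holder_cont hαpos hw
  set r := (Rρ + 1) * ε with hrdef
  have hr0 : 0 < r := by nlinarith
  have hphi := phi_int hρc hR hε
  have hphih : Integrable (fun t : E => φ ρ ε (t + h)) := hphi.comp_add_right h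
  have hix : Integrable (fun t : E => φ ρ ε t * w (x - t)) := phiw_int hρc hR hε hwc x
  have hi1 : Integrable (fun t : E => φ ρ ε (t + h) * w (x - t)) := by
    apply Continuous.integrable_of_hasCompactSupport
      (((phi_cont hρc).comp (continuous_id.add continuous_const)).mul
        (hwc.comp (continuous_const.sub continuous_id)))
    apply HasCompactSupport.intro (isCompact_closedBall (0:E) (Rρ * ε + ‖h‖))
    intro t ht
    show φ ρ ε (t + h) * w (x - t) = 0
    have h1 : Rρ * ε + ‖h‖ < ‖t‖ := by simpa [dist_zero_right] using ht
    have h2 : ‖t‖ ≤ ‖t + h‖ + ‖h‖ := by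
      calc ‖t‖ = ‖t + h - h‖ := by rw [add_sub_cancel_right]
        _ ≤ ‖t + h‖ + ‖h‖ := norm_sub_le _ _
    have h3 : Rρ * ε < ‖t + h‖ := by linarith
    rw [phi_zero hR hε h3, zero_mul]
  have hstep : mol ρ ε w (x + h) = ∫ t : E, φ ρ ε (t + h) * w (x - t) := by
    have h0 := integral_add_right_eq_self (μ := volume) (fun t : E => φ ρ ε t * w (x + h - t)) h
    have e : (fun t : E => φ ρ ε (t + h) * w (x + h - (t + h)))
        = fun t : E => φ ρ ε (t + h) * w (x - t) := by
      funext t; rw [add_sub_add_right_eq_sub]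
    calc mol ρ ε w (x + h) = ∫ t : E, φ ρ ε t * w (x + h - t) := rfl
      _ = ∫ t : E, φ ρ ε (t + h) * w (x + h - (t + h)) := h0.symm
      _ = ∫ t : E, φ ρ ε (t + h) * w (x - t) := by rw [e]
  have hzero : (∫ t : E, (φ ρ ε (t + h) - φ ρ ε t)) = 0 := by
    rw [integral_sub hphih hphi, integral_add_right_eq_self (μ := volume) (φ ρ ε) h, sub_self]
  have hsub : mol ρ ε w (x + h) - mol ρ ε w x
      = ∫ t : E, (φ ρ ε (t + h) - φ ρ ε t) * (w (x - t) - w x) := by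
    have e : (fun t : E => (φ ρ ε (t + h) - φ ρ ε t) * (w (x - t) - w x))
        = fun t : E => (φ ρ ε (t + h) * w (x - t) - φ ρ ε t * w (x - t))
            - (φ ρ ε (t + h) - φ ρ ε t) * w x := funext fun t => by ring
    have hi2 : Integrable (fun t : E => φ ρ ε (t + h) * w (x - t) - φ ρ ε t * w (x - t)) :=
      hi1.sub hix
    have hi3 : Integrable (fun t : E => (φ ρ ε (t + h) - φ ρ ε t) * w x) :=
      (hphih.sub hphi).mul_const _
    rw [e, integral_sub hi2 hi3, integral_sub hi1 hix, integral_mul_const, hzero, zero_mul,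
      sub_zero, hstep]
    rfl
  rw [hsub]
  set c := (ε ^ 3)⁻¹ * (Lρ * (‖h‖ / ε)) * (M * r ^ α) with hc
  have hc0 : 0 ≤ c := by positivity
  have hpt : ∀ t : E, ‖(φ ρ ε (t + h) - φ ρ ε t) * (w (x - t) - w x)‖
      ≤ (closedBall (0:E) r).indicator (fun _ => c) t := by
    intro t
    by_cases htr : t ∈ closedBall (0:E) r
    · rw [indicator_of_mem htr]
      have htn : ‖t‖ ≤ r := by simpa [dist_zero_right] using htr
      rw [norm_mul]
      have b1 : ‖φ ρ ε (t + h) - φ ρ ε t‖ ≤ (ε ^ 3)⁻¹ * (Lρ * (‖h‖ / ε)) := by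
        simp only [φ]
        rw [← mul_sub, Real.norm_eq_abs, abs_mul, abs_of_nonneg (by positivity : (0:ℝ) ≤ (ε ^ 3)⁻¹)]
        apply mul_le_mul_of_nonneg_left _ (by positivity : (0:ℝ) ≤ (ε ^ 3)⁻¹)
        calc |ρ (‖t + h‖ / ε) - ρ (‖t‖ / ε)| ≤ Lρ * |‖t + h‖ / ε - ‖t‖ / ε| := hL _ _
          _ ≤ Lρ * (‖h‖ / ε) := by
              apply mul_le_mul_of_nonneg_left _ hL0
              rw [div_sub_div_same, abs_div, abs_of_nonneg hε.le]
              have habs : |‖t + h‖ - ‖t‖| ≤ ‖h‖ := by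
                have h4 := abs_norm_sub_norm_le (t + h) t
                rwa [add_sub_cancel_left] at h4
              exact div_le_div_of_nonneg_right habs hε.le
      have b2 : ‖w (x - t) - w x‖ ≤ M * r ^ α := by
        rw [Real.norm_eq_abs]
        calc |w (x - t) - w x| ≤ M * dist (x - t) x ^ α := hw _ _
          _ ≤ M * r ^ α := by
              apply mul_le_mul_of_nonneg_left _ hM
              apply Real.rpow_le_rpow dist_nonneg _ hαpos.le
              rw [dist_eq_norm, sub_sub_cancel_left, norm_neg]; exact htn
      calc ‖φ ρ ε (t + h) - φ ρ ε t‖ * ‖w (x - t) - w x‖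
          ≤ ((ε ^ 3)⁻¹ * (Lρ * (‖h‖ / ε))) * (M * r ^ α) :=
            mul_le_mul b1 b2 (norm_nonneg _) (by positivity)
        _ = c := rfl
    · rw [indicator_of_notMem htr]
      have htn : r < ‖t‖ := by
        simp only [mem_closedBall, dist_zero_right, not_le] at htr; exact htr
      have hb1 : φ ρ ε t = 0 := phi_zero hR hε (by nlinarith)
      have hb2 : φ ρ ε (t + h) = 0 := by
        apply phi_zero hR hε
        have h2 : ‖t‖ ≤ ‖t + h‖ + ‖h‖ := by
          calc ‖t‖ = ‖t + h - h‖ := by rw [add_sub_cancel_right]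
            _ ≤ ‖t + h‖ + ‖h‖ := norm_sub_le _ _
        nlinarith
      rw [hb1, hb2]
      simp
  have hind : Integrable ((closedBall (0:E) r).indicator (fun _ => c)) := by
    rw [integrable_indicator_iff measurableSet_closedBall]
    exact integrableOn_const measure_closedBall_lt_top.ne
  have hra : r ^ α ≤ (Rρ + 1) * ε ^ α := by
    rw [hrdef, Real.mul_rpow (by linarith) hε.le]
    apply mul_le_mul_of_nonneg_right _ (Real.rpow_nonneg hε.le α)
    exact (Real.rpow_le_rpow_of_exponent_le (by linarith) hα1).trans_eq (Real.rpow_one _)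
  calc |∫ t : E, (φ ρ ε (t + h) - φ ρ ε t) * (w (x - t) - w x)|
      ≤ ∫ t : E, (closedBall (0:E) r).indicator (fun _ => c) t :=
        norm_integral_le_of_norm_le hind (Eventually.of_forall hpt)
    _ = (volume (closedBall (0:E) r)).toReal * c := by
        rw [integral_indicator_const _ measurableSet_closedBall, smul_eq_mul]; rfl
    _ = (8 * r ^ 3) * c := by rw [vol_ball r hr0.le]
    _ = 8 * Lρ * (Rρ + 1) ^ 3 * M * r ^ α * ‖h‖ / ε := by
        rw [hc, hrdef]; field_simp
    _ ≤ 8 * Lρ * (Rρ + 1) ^ 3 * M * ((Rρ + 1) * ε ^ α) * ‖h‖ / ε := by gcongr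
    _ = (8 * Lρ * (Rρ + 1) ^ 4) * M * ε ^ (α - 1) * ‖h‖ := by
        rw [Real.rpow_sub hε, Real.rpow_one]; ring

lemma mol_cont (hρc : Continuous ρ) (hρ0 : ∀ s, 0 ≤ ρ s)
    (hR : ∀ s : ℝ, Rρ < |s| → ρ s = 0) (hε : 0 < ε) (hαpos : 0 < α) (hα1 : α ≤ 1)
    (hRρ1 : 1 ≤ Rρ) (hL : ∀ a b : ℝ, |ρ a - ρ b| ≤ Lρ * |a - b|) (hL0 : 0 ≤ Lρ)
    {w : E → ℝ} {M : ℝ} (hM : 0 ≤ M)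
    (hw : ∀ X Y, |w X - w Y| ≤ M * dist X Y ^ α) : Continuous (mol ρ ε w) := by
  rw [continuous_iff_continuousAt]
  intro x
  apply continuousAt_of_locally_lipschitz hε ((8 * Lρ * (Rρ + 1) ^ 4) * M * ε ^ (α - 1))
  intro y hy
  have h1 := mol_lip hρc hρ0 hR hε hαpos hα1 hRρ1 hL hL0 hM hw x (y - x)
    (by rw [← dist_eq_norm]; exact hy.le)
  rw [add_sub_cancel] at h1
  rw [Real.dist_eq, dist_eq_norm]
  exact h1

end CET18
end CET18aux


open CET18

/-- the Constantin–E–Titi commutator integral estimate: for bounded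
`α`-Hölder `u, v` (with `α > 1/3`), a C¹ compactly supported `ψ`, and any unit
direction `d`,
`|∫ ((ρ_ε⋆(uv)) − (ρ_ε⋆u)(ρ_ε⋆v)) ∂_d(ψ (ρ_ε⋆u))| ≲ ε^(3α−1)`. -/
theorem stmt_18 (ρ : ℝ → ℝ) (hρ_smooth : ContDiff ℝ (⊤ : ℕ∞) ρ)
    (hρ_nonneg : ∀ s, 0 ≤ ρ s) (hρ_supp : HasCompactSupport ρ)
    (ψ : (ℝ × ℝ) × ℝ → ℝ) (hψ : ContDiff ℝ 1 ψ) (hψ_supp : HasCompactSupport ψ)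
    (α : ℝ) (hα : 1/3 < α) (hα1 : α < 1) :
    ∃ C > 0, ∀ (u v : (ℝ × ℝ) × ℝ → ℝ) (Mu Mv Bu Bv ε : ℝ),
      0 < ε → ε ≤ 1 → 0 ≤ Mu → 0 ≤ Mv → 0 ≤ Bu → 0 ≤ Bv →
      (∀ X Y, |u X - u Y| ≤ Mu * dist X Y ^ α) →
      (∀ X Y, |v X - v Y| ≤ Mv * dist X Y ^ α) →
      (∀ X, |u X| ≤ Bu) → (∀ X, |v X| ≤ Bv) →
      (∫ Y : (ℝ × ℝ) × ℝ, (ε ^ 3)⁻¹ * ρ (‖Y‖ / ε)) = 1 →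
      ∀ d : (ℝ × ℝ) × ℝ, ‖d‖ = 1 →
        |∫ X : (ℝ × ℝ) × ℝ,
            ((∫ Y : (ℝ × ℝ) × ℝ, ((ε ^ 3)⁻¹ * ρ (‖Y‖ / ε)) * (u (X - Y) * v (X - Y))) -
              (∫ Y : (ℝ × ℝ) × ℝ, ((ε ^ 3)⁻¹ * ρ (‖Y‖ / ε)) * u (X - Y)) *
                (∫ Y : (ℝ × ℝ) × ℝ, ((ε ^ 3)⁻¹ * ρ (‖Y‖ / ε)) * v (X - Y))) *
            fderiv ℝ
              (fun Z : (ℝ × ℝ) × ℝ =>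
                ψ Z * ∫ Y : (ℝ × ℝ) × ℝ, ((ε ^ 3)⁻¹ * ρ (‖Y‖ / ε)) * u (Z - Y)) X d| ≤
          C * ε ^ (3 * α - 1) *
            ((1 + Mu) ^ 2 * (1 + Mv) * (1 + Bu + Bv) ^ 2) := by
  have hαpos : 0 < α := by linarith
  have hα1' : α ≤ 1 := hα1.le
  have hρc : Continuous ρ := hρ_smooth.continuous
  -- radius of the support of ρ
  obtain ⟨r₀, hr₀⟩ := hρ_supp.isBounded.subset_closedBall 0
  set Rρ : ℝ := max r₀ 1 with hRρdef
  have hRρ1 : 1 ≤ Rρ := le_max_right _ _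
  have hRρ0 : 0 ≤ Rρ := by linarith
  have hR : ∀ s : ℝ, Rρ < |s| → ρ s = 0 := by
    intro s hs
    by_contra hne
    have hmem : s ∈ tsupport ρ := subset_tsupport ρ (by simpa [Function.mem_support] using hne)
    have := hr₀ hmem
    rw [mem_closedBall, Real.dist_eq, sub_zero] at this
    have : |s| ≤ Rρ := this.trans (le_max_left _ _)
    linarith
  -- Lipschitz constant of ρ
  obtain ⟨Lρ', hLρ'⟩ := hρ_smooth.lipschitzWith_of_hasCompactSupport hρ_supp (by simp)
  set Lρ : ℝ := (Lρ' : ℝ) with hLρdef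
  have hL : ∀ a b : ℝ, |ρ a - ρ b| ≤ Lρ * |a - b| := by
    intro a b
    have := hLρ'.dist_le_mul a b
    simpa [Real.dist_eq] using this
  have hL0 : (0:ℝ) ≤ Lρ := Lρ'.coe_nonneg
  -- Lipschitz constant of ψ
  obtain ⟨Lψ', hLψ'⟩ := hψ.lipschitzWith_of_hasCompactSupport hψ_supp (by simp)
  set Lψ : ℝ := (Lψ' : ℝ) with hLψdef
  have hLψ : ∀ a b : E, |ψ a - ψ b| ≤ Lψ * ‖a - b‖ := by
    intro a b
    have := hLψ'.dist_le_mul a b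
    simpa [Real.dist_eq, dist_eq_norm] using this
  have hLψ0 : (0:ℝ) ≤ Lψ := Lψ'.coe_nonneg
  -- bound for ψ
  obtain ⟨Cψ, hCψn⟩ := hψ_supp.exists_bound_of_continuous hψ.continuous
  have hCψ : ∀ x : E, |ψ x| ≤ Cψ := fun x => by simpa [Real.norm_eq_abs] using hCψn x
  have hCψ0 : (0:ℝ) ≤ Cψ := (abs_nonneg _).trans (hCψ 0)
  -- volume of the support of ψ
  set KV : ℝ := (volume (tsupport ψ)).toReal with hKVdef
  have hKV0 : 0 ≤ KV := ENNReal.toReal_nonneg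
  set CL : ℝ := 8 * Lρ * (Rρ + 1) ^ 4 with hCLdef
  have hCL0 : 0 ≤ CL := by
    rw [hCLdef]
    exact mul_nonneg (mul_nonneg (by norm_num) hL0) (by positivity)
  have hCbig : (0:ℝ) ≤ KV * 2 * (Cψ * CL + Lψ) * Rρ ^ 2 := by
    apply mul_nonneg _ (sq_nonneg _)
    apply mul_nonneg (by linarith)
    exact add_nonneg (mul_nonneg hCψ0 hCL0) hLψ0
  refine ⟨1 + KV * 2 * (Cψ * CL + Lψ) * Rρ ^ 2, by linarith, ?_⟩
  intro u v Mu Mv Bu Bv ε hε hε1 hMu hMv hBu hBv hu hv hub hvb hint0 d hd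
  set C : ℝ := 1 + KV * 2 * (Cψ * CL + Lψ) * Rρ ^ 2 with hCdef
  have hint : (∫ t : E, φ ρ ε t) = 1 := hint0
  have huc : Continuous u := holder_cont hαpos hu
  have hvc : Continuous v := holder_cont hαpos hv
  -- rewrite the goal using `mol`
  have e_uv : ∀ X : E, (∫ Y : E, ((ε ^ 3)⁻¹ * ρ (‖Y‖ / ε)) * (u (X - Y) * v (X - Y)))
      = mol ρ ε (fun Z => u Z * v Z) X := fun X => rfl
  have e_u : ∀ X : E, (∫ Y : E, ((ε ^ 3)⁻¹ * ρ (‖Y‖ / ε)) * u (X - Y))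
      = mol ρ ε u X := fun X => rfl
  have e_v : ∀ X : E, (∫ Y : E, ((ε ^ 3)⁻¹ * ρ (‖Y‖ / ε)) * v (X - Y))
      = mol ρ ε v X := fun X => rfl
  simp only [e_uv, e_u, e_v]
  set F : E → ℝ := fun Z => ψ Z * mol ρ ε u Z with hF
  set q : ℝ := (Rρ * ε) ^ α with hq
  have hq0 : 0 ≤ q := Real.rpow_nonneg (mul_nonneg hRρ0 hε.le) α
  set K : ℝ := Cψ * (CL * Mu * ε ^ (α - 1)) + Lψ * Bu with hK
  have hεα0 : (0:ℝ) ≤ ε ^ (α - 1) := Real.rpow_nonneg hε.le _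
  have hK0 : 0 ≤ K := by
    apply add_nonneg _ (mul_nonneg hLψ0 hBu)
    exact mul_nonneg hCψ0 (mul_nonneg (mul_nonneg hCL0 hMu) hεα0)
  -- Lipschitz-type bound for mol u
  have hmol_lip : ∀ x h : E, ‖h‖ ≤ ε →
      |mol ρ ε u (x + h) - mol ρ ε u x| ≤ CL * Mu * ε ^ (α - 1) * ‖h‖ := by
    intro x h hh
    exact mol_lip hρc hρ_nonneg hR hε hαpos hα1' hRρ1 hL hL0 hMu hu x h hh
  have hmol_bd : ∀ X : E, |mol ρ ε u X| ≤ Bu :=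
    fun X => mol_abs_le hρc hρ_nonneg hR hε hint huc hub X
  -- derivative bound
  have hFd : ∀ X : E, |fderiv ℝ F X d| ≤ K := by
    intro X
    by_cases hdiff : DifferentiableAt ℝ F X
    · have hev : ∀ᶠ x in nhds X, ‖F x - F X‖ ≤ K * ‖x - X‖ := by
        filter_upwards [closedBall_mem_nhds X hε] with x hx
        have hxX : ‖x - X‖ ≤ ε := by rwa [mem_closedBall, dist_eq_norm] at hx
        have h1 : |mol ρ ε u x - mol ρ ε u X| ≤ CL * Mu * ε ^ (α - 1) * ‖x - X‖ := by
          have := hmol_lip X (x - X) hxX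
          rwa [add_sub_cancel] at this
        have e : F x - F X = ψ x * (mol ρ ε u x - mol ρ ε u X) + (ψ x - ψ X) * mol ρ ε u X := by
          simp only [hF]; ring
        rw [Real.norm_eq_abs, e]
        calc |ψ x * (mol ρ ε u x - mol ρ ε u X) + (ψ x - ψ X) * mol ρ ε u X|
            ≤ |ψ x| * |mol ρ ε u x - mol ρ ε u X| + |ψ x - ψ X| * |mol ρ ε u X| := by
              rw [← abs_mul, ← abs_mul]; exact abs_add_le _ _
          _ ≤ Cψ * (CL * Mu * ε ^ (α - 1) * ‖x - X‖) + (Lψ * ‖x - X‖) * Bu := by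
              apply add_le_add
              · exact mul_le_mul (hCψ x) h1 (abs_nonneg _) hCψ0
              · exact mul_le_mul (hLψ x X) (hmol_bd X) (abs_nonneg _)
                  (mul_nonneg hLψ0 (norm_nonneg _))
          _ = K * ‖x - X‖ := by rw [hK]; ring
      have hnorm : ‖fderiv ℝ F X‖ ≤ K := (hdiff.hasFDerivAt).le_of_lip' hK0 hev
      calc |fderiv ℝ F X d| = ‖fderiv ℝ F X d‖ := (Real.norm_eq_abs _).symm
        _ ≤ ‖fderiv ℝ F X‖ * ‖d‖ := ContinuousLinearMap.le_opNorm _ _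
        _ ≤ K := by rw [hd, mul_one]; exact hnorm
    · rw [fderiv_zero_of_not_differentiableAt hdiff]
      simpa using hK0
  -- commutator bound
  have hcomm : ∀ X : E,
      |mol ρ ε (fun Z => u Z * v Z) X - mol ρ ε u X * mol ρ ε v X| ≤ 2 * Mu * Mv * (q * q) :=
    fun X => comm_le hρc hρ_nonneg hR hε hαpos hRρ0 hint hMu hMv hu hv X
  have hCc0 : 0 ≤ 2 * Mu * Mv * (q * q) :=
    mul_nonneg (mul_nonneg (mul_nonneg (by norm_num) hMu) hMv) (mul_nonneg hq0 hq0)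
  -- pointwise bound for the integrand
  have hHbd : ∀ X : E,
      ‖(mol ρ ε (fun Z => u Z * v Z) X - mol ρ ε u X * mol ρ ε v X) * fderiv ℝ F X d‖
        ≤ (2 * Mu * Mv * (q * q)) * K := by
    intro X
    rw [Real.norm_eq_abs, abs_mul]
    exact mul_le_mul (hcomm X) (hFd X) (abs_nonneg _) hCc0
  -- vanishing off the support of ψ
  have hH0 : ∀ X : E, X ∉ tsupport ψ →
      (mol ρ ε (fun Z => u Z * v Z) X - mol ρ ε u X * mol ρ ε v X) * fderiv ℝ F X d = 0 := by
    intro X hX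
    have hFzero : fderiv ℝ F X = 0 := by
      have hev : F =ᶠ[nhds X] (fun _ => (0:ℝ)) := by
        filter_upwards [(isClosed_tsupport ψ).isOpen_compl.mem_nhds hX] with y hy
        simp only [hF, image_eq_zero_of_notMem_tsupport hy, zero_mul]
      rw [Filter.EventuallyEq.fderiv_eq hev]
      exact fderiv_const_apply _
    rw [hFzero]
    simp
  -- measurability
  have hmolc_uv : Continuous (mol ρ ε (fun Z => u Z * v Z)) := by
    have huv : ∀ X Y : E, |u X * v X - u Y * v Y| ≤ (Mu * Bv + Mv * Bu) * dist X Y ^ α := by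
      intro X Y
      have e : u X * v X - u Y * v Y = (u X - u Y) * v X + u Y * (v X - v Y) := by ring
      rw [e]
      have hd0 : (0:ℝ) ≤ dist X Y ^ α := Real.rpow_nonneg dist_nonneg α
      calc |(u X - u Y) * v X + u Y * (v X - v Y)|
          ≤ |u X - u Y| * |v X| + |u Y| * |v X - v Y| := by
            rw [← abs_mul, ← abs_mul]; exact abs_add_le _ _
        _ ≤ (Mu * dist X Y ^ α) * Bv + Bu * (Mv * dist X Y ^ α) := by
            apply add_le_add
            · exact mul_le_mul (hu X Y) (hvb X) (abs_nonneg _)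
                (mul_nonneg hMu hd0)
            · exact mul_le_mul (hub Y) (hv X Y) (abs_nonneg _) hBu
        _ = (Mu * Bv + Mv * Bu) * dist X Y ^ α := by ring
    exact mol_cont hρc hρ_nonneg hR hε hαpos hα1' hRρ1 hL hL0
      (add_nonneg (mul_nonneg hMu hBv) (mul_nonneg hMv hBu)) huv
  have hmolc_u : Continuous (mol ρ ε u) :=
    mol_cont hρc hρ_nonneg hR hε hαpos hα1' hRρ1 hL hL0 hMu hu
  have hmolc_v : Continuous (mol ρ ε v) :=
    mol_cont hρc hρ_nonneg hR hε hαpos hα1' hRρ1 hL hL0 hMv hv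
  have hHmeas : AEStronglyMeasurable
      (fun X : E => (mol ρ ε (fun Z => u Z * v Z) X - mol ρ ε u X * mol ρ ε v X)
        * fderiv ℝ F X d) (volume.restrict (tsupport ψ)) := by
    have m1 : Measurable fun X : E => fderiv ℝ F X d := measurable_fderiv_apply_const (𝕜 := ℝ) (f := F) d
    have m2 : Measurable fun X : E =>
        mol ρ ε (fun Z => u Z * v Z) X - mol ρ ε u X * mol ρ ε v X :=
      (hmolc_uv.sub (hmolc_u.mul hmolc_v)).measurable
    exact ((m2.mul m1).aestronglyMeasurable).restrict
  -- the set integral bound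
  have hstep1 : |∫ X : E, (mol ρ ε (fun Z => u Z * v Z) X - mol ρ ε u X * mol ρ ε v X)
      * fderiv ℝ F X d| ≤ (2 * Mu * Mv * (q * q)) * K * KV := by
    have heq := setIntegral_eq_integral_of_forall_compl_eq_zero
      (f := fun X : E => (mol ρ ε (fun Z => u Z * v Z) X - mol ρ ε u X * mol ρ ε v X)
        * fderiv ℝ F X d) (s := tsupport ψ) (μ := volume) hH0
    rw [← heq, ← Real.norm_eq_abs]
    exact norm_setIntegral_le_of_norm_le_const hψ_supp.measure_lt_top
      (fun x _ => hHbd x)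
  refine hstep1.trans ?_
  -- final arithmetic
  set G : ℝ := (1 + Mu) ^ 2 * (1 + Mv) * (1 + Bu + Bv) ^ 2 with hG
  set P : ℝ := ε ^ (3 * α - 1) with hP
  have hP0 : 0 ≤ P := Real.rpow_nonneg hε.le _
  have hq' : q ≤ Rρ * ε ^ α := by
    rw [hq, Real.mul_rpow hRρ0 hε.le]
    apply mul_le_mul_of_nonneg_right _ (Real.rpow_nonneg hε.le α)
    exact (Real.rpow_le_rpow_of_exponent_le hRρ1 hα1').trans_eq (Real.rpow_one _)
  have h2a : ε ^ α * ε ^ α ≤ P := by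
    rw [hP, ← Real.rpow_add hε]
    exact Real.rpow_le_rpow_of_exponent_ge hε hε1 (by linarith)
  have h3a : ε ^ α * ε ^ α * ε ^ (α - 1) = P := by
    rw [hP, ← Real.rpow_add hε, ← Real.rpow_add hε]
    congr 1
    ring
  have hεα0' : (0:ℝ) ≤ ε ^ α := Real.rpow_nonneg hε.le _
  have hqq1 : q * q ≤ Rρ ^ 2 * P := by
    calc q * q ≤ (Rρ * ε ^ α) * (Rρ * ε ^ α) :=
          mul_le_mul hq' hq' hq0 (mul_nonneg hRρ0 hεα0')
      _ = Rρ ^ 2 * (ε ^ α * ε ^ α) := by ring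
      _ ≤ Rρ ^ 2 * P := mul_le_mul_of_nonneg_left h2a (sq_nonneg _)
  have hqq2 : q * q * ε ^ (α - 1) ≤ Rρ ^ 2 * P := by
    calc q * q * ε ^ (α - 1) ≤ (Rρ * ε ^ α) * (Rρ * ε ^ α) * ε ^ (α - 1) := by
          apply mul_le_mul_of_nonneg_right _ hεα0
          exact mul_le_mul hq' hq' hq0 (mul_nonneg hRρ0 hεα0')
      _ = Rρ ^ 2 * (ε ^ α * ε ^ α * ε ^ (α - 1)) := by ring
      _ = Rρ ^ 2 * P := by rw [h3a]
  have hG0 : 0 ≤ G := by positivity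
  have hG1 : Mu * Mu * Mv ≤ G := by
    have g1 : Mu * Mu ≤ (1 + Mu) ^ 2 := by
      have e : (1 + Mu) ^ 2 = 1 + 2 * Mu + Mu * Mu := by ring
      rw [e]; linarith
    have g2 : Mu * Mu * Mv ≤ (1 + Mu) ^ 2 * (1 + Mv) :=
      mul_le_mul g1 (by linarith) hMv (by positivity)
    have g3 : (1:ℝ) ≤ (1 + Bu + Bv) ^ 2 := by
      have e : (1 + Bu + Bv) ^ 2 = 1 + 2 * Bu + 2 * Bv + (Bu + Bv) * (Bu + Bv) := by ring
      rw [e]; linarith [mul_nonneg (add_nonneg hBu hBv) (add_nonneg hBu hBv)]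
    calc Mu * Mu * Mv ≤ (1 + Mu) ^ 2 * (1 + Mv) := g2
      _ ≤ (1 + Mu) ^ 2 * (1 + Mv) * (1 + Bu + Bv) ^ 2 :=
          le_mul_of_one_le_right (by positivity) g3
  have hG2 : Mu * Mv * Bu ≤ G := by
    have g4 : Mu * Mv ≤ (1 + Mu) ^ 2 * (1 + Mv) := by
      have e : (1 + Mu) ^ 2 = 1 + 2 * Mu + Mu * Mu := by ring
      apply mul_le_mul (by rw [e]; linarith [mul_nonneg hMu hMu]) (by linarith) hMv (by positivity)
    have g5 : Bu ≤ (1 + Bu + Bv) ^ 2 := by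
      have e : (1 + Bu + Bv) ^ 2 = 1 + 2 * Bu + 2 * Bv + (Bu + Bv) * (Bu + Bv) := by ring
      rw [e]; linarith [mul_nonneg (add_nonneg hBu hBv) (add_nonneg hBu hBv)]
    calc Mu * Mv * Bu ≤ ((1 + Mu) ^ 2 * (1 + Mv)) * (1 + Bu + Bv) ^ 2 :=
          mul_le_mul g4 g5 hBu (by positivity)
      _ = G := rfl
  have hqqe0 : 0 ≤ q * q * ε ^ (α - 1) := mul_nonneg (mul_nonneg hq0 hq0) hεα0
  have key1 : KV * (2 * Cψ * CL * (Mu * Mu * Mv)) * (q * q * ε ^ (α - 1))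
      ≤ (KV * 2 * Cψ * CL * Rρ ^ 2) * (P * G) := by
    have t1 : (Mu * Mu * Mv) * (q * q * ε ^ (α - 1)) ≤ G * (Rρ ^ 2 * P) :=
      mul_le_mul hG1 hqq2 hqqe0 hG0
    calc KV * (2 * Cψ * CL * (Mu * Mu * Mv)) * (q * q * ε ^ (α - 1))
        = (KV * 2 * Cψ * CL) * ((Mu * Mu * Mv) * (q * q * ε ^ (α - 1))) := by ring
      _ ≤ (KV * 2 * Cψ * CL) * (G * (Rρ ^ 2 * P)) := by
          apply mul_le_mul_of_nonneg_left t1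
          positivity
      _ = (KV * 2 * Cψ * CL * Rρ ^ 2) * (P * G) := by ring
  have key2 : KV * (2 * Lψ * (Mu * Mv * Bu)) * (q * q)
      ≤ (KV * 2 * Lψ * Rρ ^ 2) * (P * G) := by
    have t2 : (Mu * Mv * Bu) * (q * q) ≤ G * (Rρ ^ 2 * P) :=
      mul_le_mul hG2 hqq1 (mul_nonneg hq0 hq0) hG0
    calc KV * (2 * Lψ * (Mu * Mv * Bu)) * (q * q)
        = (KV * 2 * Lψ) * ((Mu * Mv * Bu) * (q * q)) := by ring
      _ ≤ (KV * 2 * Lψ) * (G * (Rρ ^ 2 * P)) := by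
          apply mul_le_mul_of_nonneg_left t2
          positivity
      _ = (KV * 2 * Lψ * Rρ ^ 2) * (P * G) := by ring
  have hPG0 : 0 ≤ P * G := mul_nonneg hP0 hG0
  calc 2 * Mu * Mv * (q * q) * K * KV
      = KV * (2 * Cψ * CL * (Mu * Mu * Mv)) * (q * q * ε ^ (α - 1))
        + KV * (2 * Lψ * (Mu * Mv * Bu)) * (q * q) := by rw [hK]; ring
    _ ≤ (KV * 2 * Cψ * CL * Rρ ^ 2) * (P * G) + (KV * 2 * Lψ * Rρ ^ 2) * (P * G) :=
        add_le_add key1 key2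
    _ = (KV * 2 * (Cψ * CL + Lψ) * Rρ ^ 2) * (P * G) := by ring
    _ ≤ C * (P * G) := by
        apply mul_le_mul_of_nonneg_right _ hPG0
        rw [hCdef]; linarith
    _ = C * P * G := by ring
end
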